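/- There exists a quantum strategy for the CHSH + k game using the (k+2)-qubit GHZ state that wins every consistency question with probability 1 and every game question with probability cos²(π/8), so its overall winning probability is 1 − (1−q)·sin²(π/8) where q = 1 − 2/(3^k + 1). -/

import Mathlib

noncomputable section

/-- Pauli σ_z. -/
def pauliZ : Matrix (Fin 2) (Fin 2) ℂ := !![1, 0; 0, -1]

/-- Pauli σ_x. -/
def pauliX : Matrix (Fin 2) (Fin 2) ℂ := !![0, 1; 1, 0]

/-- Bob's observable `(σ_z + (−1)^b σ_x)/√2` on input `b`. -/
def chshBobObs (b : Bool) : Matrix (Fin 2) (Fin 2) ℂ :=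
  (((Real.sqrt 2)⁻¹ : ℝ) : ℂ) • (pauliZ + (if b then (-1 : ℂ) else 1) • pauliX)

/-- Spectral projection of a ±1-valued observable: eigenvalue `+1` gives
outcome bit `false`, `−1` gives outcome bit `true`. -/
def outcomeProj (M : Matrix (Fin 2) (Fin 2) ℂ) (x : Bool) :
    Matrix (Fin 2) (Fin 2) ℂ :=
  ((2 : ℂ))⁻¹ • (1 + (if x then (-1 : ℂ) else 1) • M)

/-- The `m`-qubit GHZ state `(|0…0⟩ + |1…1⟩)/√2`. -/
def ghzVec (m : ℕ) : (Fin m → Fin 2) → ℂ :=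
  fun f => if (∀ i, f i = 0) ∨ (∀ i, f i = 1)
    then (((Real.sqrt 2)⁻¹ : ℝ) : ℂ) else 0

/-- The tensor product over the `m` qubits of single-qubit matrices. -/
def jointOp (m : ℕ) (P : Fin m → Matrix (Fin 2) (Fin 2) ℂ) :
    Matrix (Fin m → Fin 2) (Fin m → Fin 2) ℂ :=
  fun f g => ∏ i, P i (f i) (g i)

/-- Probability (as a complex number) of the outcome tuple `v` when each
player `i` measures the ±1-valued observable `M i` on the GHZ state. -/
def ghzOutcomeProb (m : ℕ) (M : Fin m → Matrix (Fin 2) (Fin 2) ℂ)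
    (v : Fin m → Bool) : ℂ :=
  ∑ f, (starRingEnd ℂ) (ghzVec m f) *
    ((jointOp m (fun i => outcomeProj (M i) (v i))).mulVec (ghzVec m)) f

/-- Player `⟨j+2⟩` is Charlie_j (player `0` is Alice, player `1` is Bob). -/
def charlieIdx (k : ℕ) (j : Fin k) : Fin (k + 2) := ⟨j.val + 2, by omega⟩

/-- The XOR `Z = Z_1 ⊕ ⋯ ⊕ Z_k` of the Charlies' answers. -/
def charlieParity (k : ℕ) (v : Fin (k + 2) → Bool) : Bool :=
  decide ((∑ j : Fin k, (v (charlieIdx k j)).toNat) % 2 = 1)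

/-- Measurement observables on a consistency question of `CHSH + k`: Alice and
the Charlies (inputs `0`) measure σ_z, Bob (unasked, dummy input `0`)
measures his input-`0` observable. -/
def chshkConsObs (k : ℕ) : Fin (k + 2) → Matrix (Fin 2) (Fin 2) ℂ :=
  fun p => if p = 1 then chshBobObs false else pauliZ

/-- Measurement observables on a game question `(a, b)` of `CHSH + k`:
Alice and the Charlies measure σ_z on input 0 and σ_x on input 1 (the
Charlies' input being `1` exactly when `a = 1`), and Bob measures
`(σ_z + (−1)^b σ_x)/√2`. -/
def chshkGameObs (k : ℕ) (a b : Bool) : Fin (k + 2) → Matrix (Fin 2) (Fin 2) ℂ :=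
  fun p => if p = 1 then chshBobObs b else (if a then pauliX else pauliZ)

end

/-!
Every test of `CHSH + k` is a parity test: it accepts iff `⊕_{p ∈ S} v_p = c` for a set `S` of
players. Writing the indicator as `(1 + (-1)^c ∏_{p ∈ S} (-1)^{v_p}) / 2`, and using that the two
outcome projections of an observable `M` sum to `1` while their signed sum is `M`, the acceptance
probability on any state `ψ` is `(1 + (-1)^c ⟨ψ, (⊗_{p ∈ S} M_p) ψ⟩) / 2`. On the GHZ state
`⟨⊗_p A_p⟩ = ½ ∑_{i,j} ∏_p (A_p)_{ij}`, so the correlators are `⟨σ_z ⊗ σ_z⟩ = 1`,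
`⟨σ_z ⊗ B_b⟩ = 1/√2` and `⟨σ_x^{⊗(k+1)} ⊗ B_b⟩ = (-1)^b/√2`, giving acceptance probabilities `1` and
`(1 + 1/√2)/2 = cos²(π/8)`.
-/

open Matrix Finset

def boolSign (x : Bool) : ℂ := if x then -1 else 1

lemma boolSign_xor (x y : Bool) : boolSign (xor x y) = boolSign x * boolSign y := by
  cases x <;> cases y <;> simp [boolSign]

lemma boolSign_decide_mod_two (n : ℕ) : boolSign (decide (n % 2 = 1)) = (-1) ^ n := by
  rw [neg_one_pow_eq_pow_mod_two]
  rcases Nat.mod_two_eq_zero_or_one n with h | h <;> simp [boolSign, h]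

lemma boolSign_eq_neg_one_pow (x : Bool) : boolSign x = (-1) ^ x.toNat := by
  cases x <;> simp [boolSign]

lemma ite_eq_eq_half_mul (x c : Bool) (X : ℂ) :
    (if x = c then X else 0) = 2⁻¹ * (X + boolSign c * boolSign x * X) := by
  cases x <;> cases c <;> simp [boolSign] <;> ring

lemma sum_outcomeProj (M : Matrix (Fin 2) (Fin 2) ℂ) : ∑ x, outcomeProj M x = 1 := by
  simp only [outcomeProj, Fintype.sum_bool, if_true, Bool.false_eq_true, if_false, ← smul_add]
  module

lemma sum_boolSign_smul_outcomeProj (M : Matrix (Fin 2) (Fin 2) ℂ) :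
    ∑ x, boolSign x • outcomeProj M x = M := by
  simp only [outcomeProj, boolSign, Fintype.sum_bool, if_true, Bool.false_eq_true, if_false]
  module

section qubits

variable {m : ℕ}

lemma jointOp_smul (c : Fin m → ℂ) (A : Fin m → Matrix (Fin 2) (Fin 2) ℂ) :
    jointOp m (fun p => c p • A p) = (∏ p, c p) • jointOp m A := by
  ext f g
  simp [jointOp, Finset.prod_mul_distrib]

lemma sum_jointOp (A : Fin m → Bool → Matrix (Fin 2) (Fin 2) ℂ) :
    ∑ v : Fin m → Bool, jointOp m (fun p => A p (v p)) = jointOp m (fun p => ∑ x, A p x) := by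
  ext f g
  simp only [jointOp, Matrix.sum_apply]
  exact (Fintype.prod_sum fun p x => A p x (f p) (g p)).symm

lemma jointOp_one : jointOp m (fun _ => 1) = 1 := by
  ext f g
  simp [jointOp, Matrix.one_apply, Finset.prod_boole, funext_iff]

lemma sum_prod_boolSign_smul_jointOp (M : Fin m → Matrix (Fin 2) (Fin 2) ℂ) (S : Finset (Fin m)) :
    ∑ v : Fin m → Bool,
        (∏ p ∈ S, boolSign (v p)) • jointOp m (fun p => outcomeProj (M p) (v p))
      = jointOp m (fun p => if p ∈ S then M p else 1) := by
  calc _ = ∑ v : Fin m → Bool, jointOp m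
          (fun p => (if p ∈ S then boolSign (v p) else 1) • outcomeProj (M p) (v p)) := by
        simp only [jointOp_smul, Fintype.prod_ite_mem]
    _ = _ := by
        rw [sum_jointOp fun p x => (if p ∈ S then boolSign x else 1) • outcomeProj (M p) x]
        congr 1
        funext p
        split_ifs
        · exact sum_boolSign_smul_outcomeProj (M p)
        · simpa using sum_outcomeProj (M p)

lemma sum_prod_boolSign_mul_expect (ψ : (Fin m → Fin 2) → ℂ) (M : Fin m → Matrix (Fin 2) (Fin 2) ℂ)
    (S : Finset (Fin m)) :
    ∑ v : Fin m → Bool, (∏ p ∈ S, boolSign (v p)) *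
        (star ψ ⬝ᵥ (jointOp m (fun p => outcomeProj (M p) (v p)) *ᵥ ψ))
      = star ψ ⬝ᵥ (jointOp m (fun p => if p ∈ S then M p else 1) *ᵥ ψ) := by
  simp only [← sum_prod_boolSign_smul_jointOp, Matrix.sum_mulVec, dotProduct_sum,
    Matrix.smul_mulVec, dotProduct_smul, smul_eq_mul]

theorem sum_ite_parity_expect (ψ : (Fin m → Fin 2) → ℂ) (M : Fin m → Matrix (Fin 2) (Fin 2) ℂ)
    (S : Finset (Fin m)) (e : (Fin m → Bool) → Bool)
    (he : ∀ v, boolSign (e v) = ∏ p ∈ S, boolSign (v p)) (c : Bool) :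
    ∑ v : Fin m → Bool, (if e v = c then
        star ψ ⬝ᵥ (jointOp m (fun p => outcomeProj (M p) (v p)) *ᵥ ψ) else 0)
      = 2⁻¹ * (star ψ ⬝ᵥ ψ +
          boolSign c * (star ψ ⬝ᵥ (jointOp m (fun p => if p ∈ S then M p else 1) *ᵥ ψ))) := by
  have hnorm := sum_prod_boolSign_mul_expect ψ M ∅
  simp only [prod_empty, one_mul, notMem_empty, if_false, jointOp_one, one_mulVec] at hnorm
  simp only [ite_eq_eq_half_mul, he, ← mul_sum, sum_add_distrib, mul_assoc,
    sum_prod_boolSign_mul_expect, hnorm]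

lemma ghzOutcomeProb_eq_dotProduct (M : Fin m → Matrix (Fin 2) (Fin 2) ℂ) (v : Fin m → Bool) :
    ghzOutcomeProb m M v
      = star (ghzVec m) ⬝ᵥ (jointOp m (fun p => outcomeProj (M p) (v p)) *ᵥ ghzVec m) := rfl

lemma ghzVec_eq_sum_single (hm : 0 < m) :
    ghzVec m = ∑ i : Fin 2, Pi.single (fun _ => i) (((Real.sqrt 2)⁻¹ : ℝ) : ℂ) := by
  have hne : (fun _ => 0 : Fin m → Fin 2) ≠ fun _ => 1 := fun h =>
    absurd (congrFun h ⟨0, hm⟩) (by decide)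
  funext f
  simp only [ghzVec, Finset.sum_apply, Fin.sum_univ_two, Pi.single_apply, ← funext_iff]
  by_cases h0 : f = fun _ => 0
  · simp [h0, hne]
  · by_cases h1 : f = fun _ => 1 <;> simp [h0, h1, hne.symm]

lemma ghzVec_expect_jointOp (hm : 0 < m) (A : Fin m → Matrix (Fin 2) (Fin 2) ℂ) :
    star (ghzVec m) ⬝ᵥ (jointOp m A *ᵥ ghzVec m) = 2⁻¹ * ∑ i, ∑ j, ∏ p, A p i j := by
  rw [ghzVec_eq_sum_single hm]
  have hr : star (((Real.sqrt 2)⁻¹ : ℝ) : ℂ) * (((Real.sqrt 2)⁻¹ : ℝ) : ℂ) = 2⁻¹ := by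
    rw [Complex.star_def, Complex.conj_ofReal, ← Complex.ofReal_mul, ← mul_inv,
      Real.mul_self_sqrt zero_le_two]
    norm_num
  simp only [Fin.sum_univ_two, star_add, Matrix.mulVec_add, dotProduct_add, add_dotProduct,
    ← Pi.single_star, single_dotProduct, mulVec_single, Pi.smul_apply, op_smul_eq_mul,
    Matrix.col_apply, jointOp]
  linear_combination (∏ p, A p 0 0 + ∏ p, A p 1 0 + ∏ p, A p 0 1 + ∏ p, A p 1 1) * hr

lemma star_ghzVec_dotProduct_ghzVec (hm : 0 < m) : star (ghzVec m) ⬝ᵥ ghzVec m = 1 := by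
  have h := ghzVec_expect_jointOp hm fun _ => 1
  rw [jointOp_one, one_mulVec] at h
  rw [h]
  norm_num [Fin.sum_univ_two, zero_pow hm.ne']

lemma ghzVec_expect_jointOp_pair (hm : 0 < m) {a b : Fin m} (hab : a ≠ b)
    (M : Fin m → Matrix (Fin 2) (Fin 2) ℂ) (ha : (M a).IsDiag) :
    star (ghzVec m) ⬝ᵥ
        (jointOp m (fun p => if p ∈ ({a, b} : Finset (Fin m)) then M p else 1) *ᵥ ghzVec m)
      = 2⁻¹ * (M a 0 0 * M b 0 0 + M a 1 1 * M b 1 1) := by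
  rw [ghzVec_expect_jointOp hm]
  have hdiag : ∀ i,
      ∏ p, (if p ∈ ({a, b} : Finset (Fin m)) then M p else 1) i i = M a i i * M b i i := by
    intro i
    simp only [apply_ite (fun A : Matrix (Fin 2) (Fin 2) ℂ => A i i), one_apply_eq,
      Fintype.prod_ite_mem, prod_pair hab]
  have hoff : ∀ i j, i ≠ j → ∏ p, (if p ∈ ({a, b} : Finset (Fin m)) then M p else 1) i j = 0 :=
    fun i j hij => prod_eq_zero (mem_univ a) (by simp [ha hij])
  simp only [Fin.sum_univ_two, hdiag, hoff 0 1 (by decide), hoff 1 0 (by decide)]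
  ring

end qubits

lemma pauliZ_isDiag : pauliZ.IsDiag := by
  intro i j h
  fin_cases i <;> fin_cases j <;> simp_all [pauliZ]

lemma chshBobObs_eq (b : Bool) :
    chshBobObs b = !![(((Real.sqrt 2)⁻¹ : ℝ) : ℂ), boolSign b * (((Real.sqrt 2)⁻¹ : ℝ) : ℂ);
      boolSign b * (((Real.sqrt 2)⁻¹ : ℝ) : ℂ), -(((Real.sqrt 2)⁻¹ : ℝ) : ℂ)] := by
  ext i j
  cases b <;> fin_cases i <;> fin_cases j <;> simp [chshBobObs, pauliZ, pauliX, boolSign]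

lemma cos_sq_pi_div_eight : Real.cos (Real.pi / 8) ^ 2 = 2⁻¹ * (1 + (Real.sqrt 2)⁻¹) := by
  rw [Real.cos_sq, show 2 * (Real.pi / 8) = Real.pi / 4 by ring, Real.cos_pi_div_four]
  have h := Real.sq_sqrt (zero_le_two (α := ℝ))
  field_simp
  linear_combination h

section chshPlusK

variable {k : ℕ}

lemma prod_univ_fin_add_two {M : Type*} [CommMonoid M] (f : Fin (k + 2) → M) :
    ∏ p, f p = f 0 * f 1 * ∏ j, f (charlieIdx k j) := by
  rw [Fin.prod_univ_succ, Fin.prod_univ_succ, Fin.succ_zero_eq_one, mul_assoc]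
  rfl

lemma charlieIdx_ne_zero (j : Fin k) : charlieIdx k j ≠ 0 := by
  simp [charlieIdx, Fin.ext_iff]

lemma charlieIdx_ne_one (j : Fin k) : charlieIdx k j ≠ 1 := by
  simp [charlieIdx, Fin.ext_iff]

lemma boolSign_charlieParity (v : Fin (k + 2) → Bool) :
    boolSign (charlieParity k v) = ∏ j, boolSign (v (charlieIdx k j)) := by
  rw [charlieParity, boolSign_decide_mod_two]
  simp only [boolSign_eq_neg_one_pow, prod_pow_eq_pow_sum]

lemma sum_consistency_win (J : Fin k) :
    ∑ v : Fin (k + 2) → Bool,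
        (if v 0 = v (charlieIdx k J) then ghzOutcomeProb (k + 2) (chshkConsObs k) v else 0)
      = 1 := by
  have hJ := (charlieIdx_ne_zero J).symm
  have hcond : ∀ v : Fin (k + 2) → Bool,
      v 0 = v (charlieIdx k J) ↔ xor (v 0) (v (charlieIdx k J)) = false :=
    fun v => bne_eq_false_iff_eq.symm
  simp only [hcond, ghzOutcomeProb_eq_dotProduct]
  rw [sum_ite_parity_expect _ _ {0, charlieIdx k J} _
      (fun v => by rw [prod_pair hJ, boolSign_xor]) false,
    star_ghzVec_dotProduct_ghzVec (by omega),
    ghzVec_expect_jointOp_pair (by omega) hJ _ (by simpa [chshkConsObs] using pauliZ_isDiag)]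
  norm_num [boolSign, chshkConsObs, pauliZ, charlieIdx_ne_one]

lemma sum_game_win_false (b : Bool) :
    ∑ v : Fin (k + 2) → Bool,
        (if v 0 = v 1 then ghzOutcomeProb (k + 2) (chshkGameObs k false b) v else 0)
      = ((Real.cos (Real.pi / 8) ^ 2 : ℝ) : ℂ) := by
  rw [cos_sq_pi_div_eight]
  push_cast
  have hcond : ∀ v : Fin (k + 2) → Bool, v 0 = v 1 ↔ xor (v 0) (v 1) = false :=
    fun v => bne_eq_false_iff_eq.symm
  simp only [hcond, ghzOutcomeProb_eq_dotProduct]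
  rw [sum_ite_parity_expect _ _ {0, 1} _
      (fun v => by rw [prod_pair zero_ne_one, boolSign_xor]) false,
    star_ghzVec_dotProduct_ghzVec (by omega),
    ghzVec_expect_jointOp_pair (by omega) zero_ne_one _
      (by simpa [chshkGameObs] using pauliZ_isDiag)]
  norm_num [boolSign, chshkGameObs, pauliZ, chshBobObs_eq]
  ring

lemma sum_game_win_true (b : Bool) :
    ∑ v : Fin (k + 2) → Bool,
        (if xor (xor (v 0) (charlieParity k v)) (v 1) = b
          then ghzOutcomeProb (k + 2) (chshkGameObs k true b) v else 0)
      = ((Real.cos (Real.pi / 8) ^ 2 : ℝ) : ℂ) := by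
  rw [cos_sq_pi_div_eight]
  push_cast
  simp only [ghzOutcomeProb_eq_dotProduct]
  rw [sum_ite_parity_expect _ _ univ _ (fun v => by
      rw [boolSign_xor, boolSign_xor, boolSign_charlieParity, prod_univ_fin_add_two]; ring) b]
  simp only [mem_univ, if_true]
  rw [star_ghzVec_dotProduct_ghzVec (by omega), ghzVec_expect_jointOp (by omega)]
  simp only [prod_univ_fin_add_two (fun p => chshkGameObs k true b p _ _), Fin.sum_univ_two]
  cases b <;> norm_num [boolSign, chshkGameObs, charlieIdx_ne_one, pauliX, chshBobObs_eq] <;> ring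

end chshPlusK

/-- The quantum strategy for the `CHSH + k` game using the `(k+2)`-qubit GHZ
state wins every consistency question with probability `1` and every game
question with probability `cos²(π/8)`; hence with `q = 1 − 2/(3^k + 1)` its
overall winning probability is `1 − (1−q)·sin²(π/8)`. -/
theorem chsh_plus_k_quantum_strategy (k : ℕ) (hk : 1 ≤ k) :
    (∀ J : Fin k,
      ∑ v : Fin (k + 2) → Bool,
        (if v 0 = v (charlieIdx k J)
          then ghzOutcomeProb (k + 2) (chshkConsObs k) v else 0) = 1) ∧
    (∀ a b : Bool,
      ∑ v : Fin (k + 2) → Bool,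
        (if (if a then xor (xor (v 0) (charlieParity k v)) (v 1) = b
             else v 0 = v 1)
          then ghzOutcomeProb (k + 2) (chshkGameObs k a b) v else 0)
        = (((Real.cos (Real.pi / 8))^2 : ℝ) : ℂ)) ∧
    ((((1 - 2 / (3^k + 1) : ℝ)) : ℂ) * ((1 / (k : ℂ)) * ∑ J : Fin k,
        ∑ v : Fin (k + 2) → Bool,
          (if v 0 = v (charlieIdx k J)
            then ghzOutcomeProb (k + 2) (chshkConsObs k) v else 0))
      + (((2 / (3^k + 1) : ℝ)) : ℂ) * ((1 / 4) * ∑ a : Bool, ∑ b : Bool,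
        ∑ v : Fin (k + 2) → Bool,
          (if (if a then xor (xor (v 0) (charlieParity k v)) (v 1) = b
               else v 0 = v 1)
            then ghzOutcomeProb (k + 2) (chshkGameObs k a b) v else 0))
      = (((1 - (2 / (3^k + 1)) * Real.sin (Real.pi / 8)^2 : ℝ)) : ℂ)) := by
  have hcons := sum_consistency_win (k := k)
  have hgame : ∀ a b : Bool,
      ∑ v : Fin (k + 2) → Bool,
        (if (if a then xor (xor (v 0) (charlieParity k v)) (v 1) = b else v 0 = v 1)
          then ghzOutcomeProb (k + 2) (chshkGameObs k a b) v else 0)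
        = (((Real.cos (Real.pi / 8)) ^ 2 : ℝ) : ℂ) := by
    rintro (_ | _) b
    · exact sum_game_win_false b
    · exact sum_game_win_true b
  refine ⟨hcons, hgame, ?_⟩
  have hk0 : (k : ℂ) ≠ 0 := Nat.cast_ne_zero.mpr (by omega)
  simp only [hcons, hgame, sum_const, card_univ, Fintype.card_fin, Fintype.card_bool, nsmul_eq_mul,
    mul_one, Real.sin_sq]
  field_simp
  push_cast
  ring
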